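/- If Q is symmetric positive definite and H is an arbitrary square matrix, then the Lyapunov equation W Q + Q W = H + Hᵀ has a unique symmetric solution W. -/

import Mathlib

/-!
The map `W ↦ W Q + Q W` is linear on a finite-dimensional space, so it suffices to show it is
injective. If `W Q + Q W = 0`, then `0 = tr (Wᴴ (W Q + Q W)) = tr (W Q Wᴴ) + tr (Wᴴ Q W)`, a sum of
two nonnegative terms, and `tr (Bᴴ Q B) = 0` forces `B = 0` when `Q` is positive definite.
When `Q` and the right-hand side are symmetric, transposing the equation shows that `Wᵀ` solves it
as well, so uniqueness gives `Wᵀ = W`.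
-/

open Matrix

namespace Matrix

variable {n R 𝕜 : Type*} [Fintype n]

def lyapunovMap [CommSemiring R] (Q : Matrix n n R) : Matrix n n R →ₗ[R] Matrix n n R :=
  LinearMap.mulRight R Q + LinearMap.mulLeft R Q

@[simp]
theorem lyapunovMap_apply [CommSemiring R] (Q W : Matrix n n R) :
    lyapunovMap Q W = W * Q + Q * W :=
  rfl

theorem IsSymm.lyapunovMap_transpose [CommSemiring R] {Q : Matrix n n R} (hQ : Q.IsSymm)
    (W : Matrix n n R) : lyapunovMap Q Wᵀ = (lyapunovMap Q W)ᵀ := by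
  simp only [lyapunovMap_apply, transpose_add, transpose_mul, hQ.eq, add_comm]

theorem IsSymm.of_lyapunovMap_eq [CommSemiring R] {Q C W : Matrix n n R} (hQ : Q.IsSymm)
    (hinj : Function.Injective (lyapunovMap Q)) (hC : C.IsSymm) (hW : lyapunovMap Q W = C) :
    W.IsSymm :=
  hinj <| by rw [hQ.lyapunovMap_transpose, hW, hC.eq]

open scoped ComplexOrder

variable [RCLike 𝕜] {Q : Matrix n n 𝕜}

theorem PosDef.trace_conjTranspose_mul_mul_eq_zero_iff {m : Type*} [Fintype m]
    (hQ : Q.PosDef) (B : Matrix n m 𝕜) : (Bᴴ * Q * B).trace = 0 ↔ B = 0 := by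
  refine ⟨fun h => ?_, fun h => by simp [h]⟩
  have hBQB : Bᴴ * Q * B = 0 :=
    ((hQ.posSemidef.conjTranspose_mul_mul_same B).trace_eq_zero_iff).mp h
  have hBx (x : m → 𝕜) : B *ᵥ x = 0 := by
    by_contra hx
    have := hQ.dotProduct_mulVec_pos hx
    rw [star_mulVec, ← dotProduct_mulVec, mulVec_mulVec, mulVec_mulVec, hBQB] at this
    simp at this
  exact Matrix.ext_iff_mulVec.mpr fun x => by rw [hBx, zero_mulVec]

theorem PosDef.lyapunovMap_injective (hQ : Q.PosDef) : Function.Injective (lyapunovMap Q) := by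
  rw [← LinearMap.ker_eq_bot, LinearMap.ker_eq_bot']
  intro W hW
  have htrace : (Wᴴᴴ * Q * Wᴴ).trace + (Wᴴ * Q * W).trace = 0 := by
    rw [conjTranspose_conjTranspose, trace_mul_cycle, ← trace_add, Matrix.mul_assoc,
      Matrix.mul_assoc, ← Matrix.mul_add, ← lyapunovMap_apply, hW, Matrix.mul_zero, trace_zero]
  have hnonneg (B : Matrix n n 𝕜) : 0 ≤ (Bᴴ * Q * B).trace :=
    (hQ.posSemidef.conjTranspose_mul_mul_same B).trace_nonneg
  exact (hQ.trace_conjTranspose_mul_mul_eq_zero_iff W).mp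
    ((add_eq_zero_iff_of_nonneg (hnonneg _) (hnonneg _)).mp htrace).2

theorem PosDef.lyapunovMap_bijective (hQ : Q.PosDef) : Function.Bijective (lyapunovMap Q) :=
  ⟨hQ.lyapunovMap_injective, LinearMap.injective_iff_surjective.mp hQ.lyapunovMap_injective⟩

end Matrix

theorem stmt_18_general (n : ℕ) (Q H : Matrix (Fin n) (Fin n) ℝ)
    (hQ : Q.PosDef) :
    (∃! W : Matrix (Fin n) (Fin n) ℝ, W * Q + Q * W = H + Hᵀ) ∧
    (∀ W : Matrix (Fin n) (Fin n) ℝ, W * Q + Q * W = H + Hᵀ → W.IsSymm) := by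
  have hQs : Q.IsSymm := isHermitian_iff_isSymm.mp hQ.isHermitian
  refine ⟨hQ.lyapunovMap_bijective.existsUnique (H + Hᵀ), fun W hW => ?_⟩
  exact hQs.of_lyapunovMap_eq hQ.lyapunovMap_injective (isSymm_add_transpose_self H) hW

theorem stmt_18 (n : ℕ) (Q H : Matrix (Fin n) (Fin n) ℝ)
    (hQs : Q.IsSymm) (hQ : Q.PosDef) :
    (∃! W : Matrix (Fin n) (Fin n) ℝ, W * Q + Q * W = H + Hᵀ) ∧
    (∀ W : Matrix (Fin n) (Fin n) ℝ, W * Q + Q * W = H + Hᵀ → W.IsSymm) :=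
  stmt_18_general n Q H hQ
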